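/- Let P : v_k, …, v_l be a diameter of T, and for each vertex v_i of P let T_{v_i} be the component containing v_i of the forest obtained from T by deleting all edges of P (so the sets T_{v_i} partition V). Define the weighted path P̂ on the vertices v_k, …, v_l with the same edge lengths as P and with aggregated weights ŵ_i = Σ_{v∈T_{v_i}} w_v and ẑ_i = Σ_{v∈T_{v_i}} z_v. Then for every edge e of P, with facilities placed at the endpoints v_l and v_k, the balanced 2-maxian objective values on T and on P̂ differ by a constant independent of e: F_T(e, v_l, v_k) = F_{P̂}(e, v_l, v_k) + λ·C, where C = Σ_{i=k}^{l} Σ_{v∈T_{v_i}} w_v d(v, v_i). In particular, an edge of P maximizing F_{P̂}(·, v_l, v_k) also maximizes F_T(·, v_l, v_k). -/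

import Mathlib

/-- Weighted distance between two vertices of a tree:
the total length of the unique path between them. -/
noncomputable def treeDist {V : Type*} (T : SimpleGraph V) (hT : T.IsTree) (ℓ : Sym2 V → ℝ)
    (u v : V) : ℝ :=
  (((hT.existsUnique_path u v).exists.choose.edges.map ℓ).sum)

/-- The vertex set of the component containing `x` of the graph obtained from `T`
by deleting the edges in `E`. -/
noncomputable def comp {V : Type*} [Fintype V] (T : SimpleGraph V) (E : Set (Sym2 V)) (x : V) :
    Finset V :=
  @Finset.filter _ (fun v => (T.deleteEdges E).Reachable x v) (Classical.decPred _) Finset.univ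

open SimpleGraph Walk

section Aux
variable {V : Type*} [DecidableEq V] {T : SimpleGraph V}

lemma path_unique (hT : T.IsTree) {u v : V} {q r : T.Walk u v} (hq : q.IsPath) (hr : r.IsPath) :
    q = r := (hT.existsUnique_path u v).unique hq hr

lemma treeDist_eq (hT : T.IsTree) (ℓ : Sym2 V → ℝ) {u v : V} (q : T.Walk u v) (hq : q.IsPath) :
    treeDist T hT ℓ u v = (q.edges.map ℓ).sum := by
  unfold treeDist
  rw [path_unique hT (hT.existsUnique_path u v).exists.choose_spec hq]

lemma mem_comp {V : Type*} [Fintype V] {T : SimpleGraph V} {E : Set (Sym2 V)} {x v : V} :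
    v ∈ comp T E x ↔ (T.deleteEdges E).Reachable x v := by
  simp [comp]

lemma reach_del_iff {E : Set (Sym2 V)} {u v : V} :
    (T.deleteEdges E).Reachable u v ↔ ∃ q : T.Walk u v, q.IsPath ∧ ∀ f ∈ q.edges, f ∉ E := by
  constructor
  · rintro ⟨q⟩
    have hsub : ∀ f ∈ q.edges, f ∈ T.edgeSet := by
      intro f hf
      have := q.edges_subset_edgeSet hf
      rw [edgeSet_deleteEdges] at this
      exact this.1
    refine ⟨(q.transfer T hsub).bypass, (q.transfer T hsub).bypass_isPath, ?_⟩
    intro f hf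
    have hf' : f ∈ q.edges := by
      have := (q.transfer T hsub).edges_bypass_subset hf
      rwa [q.edges_transfer hsub] at this
    have := q.edges_subset_edgeSet hf'
    rw [edgeSet_deleteEdges] at this
    exact this.2
  · rintro ⟨q, -, h⟩
    exact ⟨q.toDeleteEdges E h⟩

lemma unique_path_avoids (hT : T.IsTree) {E : Set (Sym2 V)} {u v : V}
    (h : (T.deleteEdges E).Reachable u v) {q : T.Walk u v} (hq : q.IsPath) :
    ∀ f ∈ q.edges, f ∉ E := by
  obtain ⟨r, hrp, hre⟩ := reach_del_iff.1 h
  rw [path_unique hT hq hrp]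
  exact hre

lemma isPath_append {u v w : V} {q : T.Walk u v} {r : T.Walk v w} (hq : q.IsPath)
    (hr : r.IsPath) (h : ∀ x, x ∈ q.support → x ∈ r.support → x = v) :
    (q.append r).IsPath := by
  rw [Walk.isPath_def, Walk.support_append, List.nodup_append]
  refine ⟨hq.support_nodup, ?_, ?_⟩
  · have := hr.support_nodup
    rw [r.support_eq_cons] at this
    exact (List.nodup_cons.1 this).2
  · intro x hx1 y hx2 hxy
    subst hxy
    have hx2' : x ∈ r.support := List.mem_of_mem_tail hx2
    have hxv := h x hx1 hx2'
    subst hxv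
    have := hr.support_nodup
    rw [r.support_eq_cons] at this
    exact (List.nodup_cons.1 this).1 hx2

lemma subwalk (hT : T.IsTree) {a b : V} {p : T.Walk a b} (hp : p.IsPath) {x y : V}
    (hx : x ∈ p.support) (hy : y ∈ p.support) :
    ∃ r : T.Walk x y, r.IsPath ∧ (∀ f ∈ r.edges, f ∈ p.edges) ∧
      (∀ u ∈ r.support, u ∈ p.support) := by
  by_cases hy1 : y ∈ (p.takeUntil x hx).support
  · refine ⟨((p.takeUntil x hx).dropUntil y hy1).reverse,
      ((hp.takeUntil hx).dropUntil hy1).reverse, ?_, ?_⟩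
    · intro f hf
      rw [edges_reverse, List.mem_reverse] at hf
      exact p.edges_takeUntil_subset hx ((p.takeUntil x hx).edges_dropUntil_subset hy1 hf)
    · intro u hu
      rw [support_reverse, List.mem_reverse] at hu
      exact p.support_takeUntil_subset hx ((p.takeUntil x hx).support_dropUntil_subset hy1 hu)
  · have hy2 : y ∈ (p.dropUntil x hx).support := by
      have := p.take_spec hx
      have hmem : y ∈ ((p.takeUntil x hx).append (p.dropUntil x hx)).support := by
        rw [this]; exact hy
      rw [mem_support_append_iff] at hmem
      exact hmem.resolve_left hy1
    refine ⟨(p.dropUntil x hx).takeUntil y hy2, (hp.dropUntil hx).takeUntil hy2, ?_, ?_⟩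
    · intro f hf
      exact p.edges_dropUntil_subset hx ((p.dropUntil x hx).edges_takeUntil_subset hy2 hf)
    · intro u hu
      exact p.support_dropUntil_subset hx ((p.dropUntil x hx).support_takeUntil_subset hy2 hu)
end Aux

section Aux2
variable {V : Type*} [DecidableEq V] {T : SimpleGraph V}

lemma support_no_reach (hT : T.IsTree) {a b : V} {p : T.Walk a b} (hp : p.IsPath) {x y : V}
    (hx : x ∈ p.support) (hy : y ∈ p.support)
    (hr : (T.deleteEdges {e | e ∈ p.edges}).Reachable x y) : x = y := by
  by_contra hne
  obtain ⟨r, hrp, hre, -⟩ := subwalk hT hp hx hy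
  have havoid := unique_path_avoids hT hr hrp
  cases r with
  | nil => exact hne rfl
  | cons h q =>
    exact havoid _ List.mem_cons_self (hre _ List.mem_cons_self)

lemma exists_rep_aux (hT : T.IsTree) {a b : V} (p : T.Walk a b) :
    ∀ {v c : V}, T.Walk v c → c ∈ p.support →
      ∃ x ∈ p.support, (T.deleteEdges {e | e ∈ p.edges}).Reachable x v := by
  intro v c q
  induction q with
  | nil => intro hc; exact ⟨_, hc, Reachable.refl _⟩
  | @cons v u _ h q ih =>
    intro hc
    by_cases hv : v ∈ p.support
    · exact ⟨v, hv, Reachable.refl _⟩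
    · obtain ⟨x, hx, hr⟩ := ih hc
      have hne : s(v, u) ∉ {e | e ∈ p.edges} := fun hcne =>
        hv (p.fst_mem_support_of_mem_edges hcne)
      exact ⟨x, hx, hr.trans ((deleteEdges_adj.2 ⟨h, hne⟩).reachable).symm⟩

lemma exists_rep (hT : T.IsTree) {a b : V} (p : T.Walk a b) (v : V) :
    ∃ x ∈ p.support, (T.deleteEdges {e | e ∈ p.edges}).Reachable x v := by
  obtain ⟨q⟩ := hT.isConnected.preconnected v b
  exact exists_rep_aux hT p q p.end_mem_support

lemma dist_add (hT : T.IsTree) (ℓ : Sym2 V → ℝ) {a b : V} {p : T.Walk a b} (hp : p.IsPath)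
    {x y v : V} (hx : x ∈ p.support) (hy : y ∈ p.support)
    (hv : (T.deleteEdges {e | e ∈ p.edges}).Reachable x v) :
    treeDist T hT ℓ v y = treeDist T hT ℓ v x + treeDist T hT ℓ x y := by
  obtain ⟨q, hqp, hqe⟩ := reach_del_iff.1 hv.symm
  obtain ⟨r, hrp, hre, hrs⟩ := subwalk hT hp hx hy
  have happ : (q.append r).IsPath := by
    refine isPath_append hqp hrp ?_
    intro u hu1 hu2
    have hvu : (T.deleteEdges {e | e ∈ p.edges}).Reachable v u := by
      refine reach_del_iff.2 ⟨q.takeUntil u hu1, hqp.takeUntil hu1, ?_⟩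
      intro f hf
      exact hqe f (q.edges_takeUntil_subset hu1 hf)
    exact (support_no_reach hT hp hx (hrs u hu2) (hv.trans hvu)).symm
  rw [treeDist_eq hT ℓ _ happ, treeDist_eq hT ℓ q hqp, treeDist_eq hT ℓ r hrp,
    Walk.edges_append, List.map_append, List.sum_append]

lemma reach_endpoint_aux {c d : V} :
    ∀ {v u : V}, T.Walk v u →
      ((T.deleteEdges {s(c, d)}).Reachable u c ∨ (T.deleteEdges {s(c, d)}).Reachable u d) →
      ((T.deleteEdges {s(c, d)}).Reachable v c ∨ (T.deleteEdges {s(c, d)}).Reachable v d) := by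
  intro v u q
  induction q with
  | nil => exact id
  | @cons v w _ h q ih =>
    intro hu
    by_cases hsv : s(v, w) = s(c, d)
    · rw [Sym2.eq_iff] at hsv
      rcases hsv with ⟨rfl, rfl⟩ | ⟨rfl, rfl⟩
      · exact Or.inl (Reachable.refl _)
      · exact Or.inr (Reachable.refl _)
    · have hadj : (T.deleteEdges {s(c, d)}).Adj v w :=
        deleteEdges_adj.2 ⟨h, by simpa using hsv⟩
      rcases ih hu with h' | h'
      · exact Or.inl (hadj.reachable.trans h')
      · exact Or.inr (hadj.reachable.trans h')

lemma reach_endpoint (hT : T.IsTree) {c d : V} (hcd : T.Adj c d) (v : V) :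
    (T.deleteEdges {s(c, d)}).Reachable v c ∨ (T.deleteEdges {s(c, d)}).Reachable v d := by
  obtain ⟨q⟩ := hT.isConnected.preconnected v c
  exact reach_endpoint_aux q (Or.inl (Reachable.refl _))

lemma phat_support_aux {a b : V} {p : T.Walk a b} {e : Sym2 V} {u x : V}
    (q : ((SimpleGraph.fromEdgeSet {e | e ∈ p.edges}).deleteEdges {e}).Walk u x)
    (hu : u ∈ p.support) : ∀ w ∈ q.support, w ∈ p.support := by
  induction q with
  | nil => intro w hw; rw [Walk.mem_support_nil_iff] at hw; rwa [hw]
  | @cons v u' _ h q ih =>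
    intro w hw
    have hadj : s(v, u') ∈ p.edges := by
      have := (deleteEdges_adj.1 h).1
      exact ((fromEdgeSet_adj _).1 this).1
    rw [Walk.support_cons] at hw
    rcases List.mem_cons.1 hw with rfl | hw
    · exact hu
    · exact ih (p.snd_mem_support_of_mem_edges hadj) w hw
end Aux2

section Aux3
variable {V : Type*} [DecidableEq V] [Fintype V] {T : SimpleGraph V}

lemma comp_phat (hT : T.IsTree) {a b : V} {p : T.Walk a b} (hp : p.IsPath)
    (e : Sym2 V) {u : V} (hu : u ∈ p.support) (x : V) :
    x ∈ comp (SimpleGraph.fromEdgeSet {e' | e' ∈ p.edges}) {e} u ↔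
      x ∈ p.support ∧ x ∈ comp T {e} u := by
  rw [mem_comp, mem_comp]
  constructor
  · rintro ⟨q⟩
    refine ⟨phat_support_aux q hu x q.end_mem_support, ?_⟩
    have htr : ∀ f ∈ q.edges, f ∈ (T.deleteEdges {e}).edgeSet := by
      intro f hf
      have h1 := q.edges_subset_edgeSet hf
      rw [edgeSet_deleteEdges, edgeSet_fromEdgeSet] at h1
      rw [edgeSet_deleteEdges]
      exact ⟨p.edges_subset_edgeSet h1.1.1, h1.2⟩
    exact ⟨q.transfer _ htr⟩
  · rintro ⟨hx, hr⟩
    obtain ⟨r, hrp, hre, -⟩ := subwalk hT hp hu hx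
    have havoid := unique_path_avoids hT hr hrp
    have htr : ∀ f ∈ r.edges,
        f ∈ ((SimpleGraph.fromEdgeSet {e' | e' ∈ p.edges}).deleteEdges {e}).edgeSet := by
      intro f hf
      rw [edgeSet_deleteEdges, edgeSet_fromEdgeSet]
      exact ⟨⟨hre f hf, T.not_isDiag_of_mem_edgeSet (r.edges_subset_edgeSet hf)⟩, havoid f hf⟩
    exact ⟨r.transfer _ htr⟩

end Aux3

/-- Let `p` be a diameter path of the tree `T` with endpoints `a` and `b`.
For a vertex `x` of `p`, let `T_x` be the component containing `x` of the forest obtained by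
deleting all edges of `p` from `T`. Form the weighted path `P̂` on the vertices of `p` (same
edge lengths, hence the same distances between its vertices) with aggregated weights
`ŵ x = ∑_{v∈T_x} w_v` and `ẑ x = ∑_{v∈T_x} z_v`. For an edge `e` of `p`, let `F_T e` and
`F_P̂ e` be the balanced 2-maxian objectives with facilities at `b` and `a` for the deleted
edge `e`, computed in `T` and in `P̂` respectively. Then for every edge `e` of `p`,
`F_T e = F_P̂ e + λ·C` where `C = ∑_{x∈p} ∑_{v∈T_x} w_v d(v,x)` is independent of `e`; in
particular, an edge of `p` maximizing `F_P̂` also maximizes `F_T` among the edges of `p`. -/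
theorem reduction_to_aggregated_diameter_path {V : Type*} [Fintype V] [DecidableEq V]
    (T : SimpleGraph V) (hT : T.IsTree) (ℓ : Sym2 V → ℝ) (hℓ : ∀ e, 0 ≤ ℓ e)
    (w z : V → ℝ) (hw : ∀ v, 0 ≤ w v) (hz : ∀ v, 0 ≤ z v)
    (lam : ℝ) (hlam : lam ∈ Set.Icc (0 : ℝ) 1)
    (a b : V) (p : T.Walk a b) (hp : p.IsPath)
    (hdiam : ∀ u v : V, treeDist T hT ℓ u v ≤ treeDist T hT ℓ a b)
    (Phat : SimpleGraph V) (hPhat : Phat = SimpleGraph.fromEdgeSet {e | e ∈ p.edges})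
    (What Zhat : V → ℝ)
    (hWhat : ∀ x, What x = ∑ v ∈ comp T {e | e ∈ p.edges} x, w v)
    (hZhat : ∀ x, Zhat x = ∑ v ∈ comp T {e | e ∈ p.edges} x, z v)
    (C : ℝ)
    (hC : C = ∑ x ∈ p.support.toFinset, ∑ v ∈ comp T {e | e ∈ p.edges} x,
        w v * treeDist T hT ℓ v x)
    (FT FP : Sym2 V → ℝ)
    (hFT : ∀ e, FT e =
      lam * ((∑ v ∈ comp T {e} a, w v * treeDist T hT ℓ v b) +
          ∑ v ∈ comp T {e} b, w v * treeDist T hT ℓ v a) -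
        (1 - lam) * |(∑ v ∈ comp T {e} a, z v) - ∑ v ∈ comp T {e} b, z v|)
    (hFP : ∀ e, FP e =
      lam * ((∑ x ∈ comp Phat {e} a, What x * treeDist T hT ℓ x b) +
          ∑ x ∈ comp Phat {e} b, What x * treeDist T hT ℓ x a) -
        (1 - lam) * |(∑ x ∈ comp Phat {e} a, Zhat x) - ∑ x ∈ comp Phat {e} b, Zhat x|) :
    (∀ e ∈ p.edges, FT e = FP e + lam * C) ∧
      ∀ e' ∈ p.edges, (∀ e ∈ p.edges, FP e ≤ FP e') → ∀ e ∈ p.edges, FT e ≤ FT e' := by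
  classical
  have ha : a ∈ p.support := p.start_mem_support
  have hb : b ∈ p.support := p.end_mem_support
  have key : ∀ e ∈ p.edges, FT e = FP e + lam * C := by
    intro e he
    revert he
    induction e using Sym2.ind with
    | _ c d =>
    intro he
    have hcd : T.Adj c d := p.edges_subset_edgeSet he
    have hnab : ¬ (T.deleteEdges {s(c, d)}).Reachable a b := fun hr =>
      unique_path_avoids hT hr hp _ he rfl
    have hmono : ∀ u v : V, (T.deleteEdges {e | e ∈ p.edges}).Reachable u v →
        (T.deleteEdges {s(c, d)}).Reachable u v := by
      intro u v h
      refine h.mono ?_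
      intro x y hxy
      rw [SimpleGraph.deleteEdges_adj] at hxy ⊢
      refine ⟨hxy.1, fun hcon => hxy.2 ?_⟩
      rw [Set.mem_singleton_iff] at hcon
      rw [hcon]
      exact he
    have hcover : ∀ v : V, v ∈ comp T {s(c, d)} a ∨ v ∈ comp T {s(c, d)} b := by
      intro v
      rcases reach_endpoint hT hcd a with ha' | ha' <;>
        rcases reach_endpoint hT hcd b with hb' | hb' <;>
        rcases reach_endpoint hT hcd v with hv | hv
      · exact absurd (ha'.trans hb'.symm) hnab
      · exact absurd (ha'.trans hb'.symm) hnab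
      · exact Or.inl (mem_comp.2 (ha'.trans hv.symm))
      · exact Or.inr (mem_comp.2 (hb'.trans hv.symm))
      · exact Or.inr (mem_comp.2 (hb'.trans hv.symm))
      · exact Or.inl (mem_comp.2 (ha'.trans hv.symm))
      · exact absurd (ha'.trans hb'.symm) hnab
      · exact absurd (ha'.trans hb'.symm) hnab
    have hdisj : ∀ v : V, v ∈ comp T {s(c, d)} a → v ∈ comp T {s(c, d)} b → False :=
      fun v h1 h2 => hnab ((mem_comp.1 h1).trans (mem_comp.1 h2).symm)
    have hcompEq : ∀ u0 : V, comp T {s(c, d)} u0 =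
        (p.support.toFinset.filter (· ∈ comp T {s(c, d)} u0)).biUnion
          (fun x => comp T {e | e ∈ p.edges} x) := by
      intro u0
      ext v
      simp only [Finset.mem_biUnion, Finset.mem_filter]
      constructor
      · intro hv
        obtain ⟨x, hx, hr⟩ := exists_rep hT p v
        refine ⟨x, ⟨List.mem_toFinset.2 hx, ?_⟩, mem_comp.2 hr⟩
        exact mem_comp.2 ((mem_comp.1 hv).trans (hmono _ _ hr).symm)
      · rintro ⟨x, ⟨hxS, hxu⟩, hvx⟩
        exact mem_comp.2 ((mem_comp.1 hxu).trans (hmono _ _ (mem_comp.1 hvx)))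
    have hpd : ∀ s' : Finset V, s' ⊆ p.support.toFinset →
        (↑s' : Set V).PairwiseDisjoint (fun x => comp T {e | e ∈ p.edges} x) := by
      intro s' hs' x hx y hy hne
      rw [Function.onFun, Finset.disjoint_left]
      intro v hvx hvy
      exact hne (support_no_reach hT hp
        (List.mem_toFinset.1 (hs' hx)) (List.mem_toFinset.1 (hs' hy))
        ((mem_comp.1 hvx).trans (mem_comp.1 hvy).symm))
    have hPA : ∀ u0 ∈ p.support, comp Phat {s(c, d)} u0 =
        p.support.toFinset.filter (· ∈ comp T {s(c, d)} u0) := by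
      intro u0 hu0
      ext x
      rw [hPhat, comp_phat hT hp _ hu0, Finset.mem_filter, List.mem_toFinset]
    have hsumW : ∀ u0 y : V, y ∈ p.support →
        ∑ v ∈ comp T {s(c, d)} u0, w v * treeDist T hT ℓ v y
          = ∑ x ∈ p.support.toFinset.filter (· ∈ comp T {s(c, d)} u0),
              (What x * treeDist T hT ℓ x y +
                ∑ v ∈ comp T {e | e ∈ p.edges} x, w v * treeDist T hT ℓ v x) := by
      intro u0 y hy
      conv_lhs => rw [hcompEq u0]
      rw [Finset.sum_biUnion (hpd _ (Finset.filter_subset _ _))]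
      refine Finset.sum_congr rfl ?_
      intro x hx
      have hxS : x ∈ p.support := List.mem_toFinset.1 (Finset.mem_filter.1 hx).1
      have hterm : ∀ v ∈ comp T {e | e ∈ p.edges} x,
          w v * treeDist T hT ℓ v y
            = w v * treeDist T hT ℓ v x + w v * treeDist T hT ℓ x y := by
        intro v hv
        rw [dist_add hT ℓ hp hxS hy (mem_comp.1 hv)]
        ring
      rw [Finset.sum_congr rfl hterm, Finset.sum_add_distrib, ← Finset.sum_mul, ← hWhat x]
      ring
    have hsumZ : ∀ u0 : V,
        ∑ v ∈ comp T {s(c, d)} u0, z v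
          = ∑ x ∈ p.support.toFinset.filter (· ∈ comp T {s(c, d)} u0), Zhat x := by
      intro u0
      conv_lhs => rw [hcompEq u0]
      rw [Finset.sum_biUnion (hpd _ (Finset.filter_subset _ _))]
      exact Finset.sum_congr rfl fun x _ => (hZhat x).symm
    have hSb : p.support.toFinset.filter (· ∈ comp T {s(c, d)} b)
        = p.support.toFinset.filter (fun x => ¬ (x ∈ comp T {s(c, d)} a)) := by
      refine Finset.filter_congr ?_
      intro x _
      constructor
      · intro h1 h2
        exact hdisj x h2 h1
      · intro h1
        exact (hcover x).resolve_left h1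
    have hCsplit :
        (∑ x ∈ p.support.toFinset.filter (· ∈ comp T {s(c, d)} a),
            ∑ v ∈ comp T {e | e ∈ p.edges} x, w v * treeDist T hT ℓ v x)
          + ∑ x ∈ p.support.toFinset.filter (· ∈ comp T {s(c, d)} b),
              ∑ v ∈ comp T {e | e ∈ p.edges} x, w v * treeDist T hT ℓ v x = C := by
      rw [hSb, hC]
      exact Finset.sum_filter_add_sum_filter_not _ _ _
    rw [hFT, hFP, hPA a ha, hPA b hb, hsumW a b hb, hsumW b a ha, hsumZ a, hsumZ b,
      Finset.sum_add_distrib, Finset.sum_add_distrib, ← hCsplit]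
    ring
  refine ⟨key, ?_⟩
  intro e' he' hmax e he
  rw [key e he, key e' he']
  have := hmax e he
  linarith
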